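/- Let W ⊆ V and let S(W) := {(v,i) ∈ S : v ∈ W}. Then the maximum size of a partial transversal of the set system (A(e), e ∈ E) contained in S(W) equals the number of edges of G having at least one endpoint in W, i.e., |E| − |E₁| where E₁ is the set of edges with both endpoints in V \ W. (Claim r(X) = |E₂| in the proof of Theorem 1(b).) -/

import Mathlib

open Finset

variable {V E : Type*}

/-- Degree of a vertex in the multigraph given by `ends : E → Sym2 V`
(a loop contributes 2). -/
def mdeg [Fintype E] [DecidableEq V] (ends : E → Sym2 V) (v : V) : ℕ :=
  ∑ e : E, (if ends e = Sym2.mk v v then 2 else if v ∈ ends e then 1 else 0)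

/-- The ground set `S = {(v,i) : 1 ≤ i ≤ deg v}`. -/
def mS [Fintype V] [Fintype E] [DecidableEq V] (ends : E → Sym2 V) : Finset (V × ℕ) :=
  Finset.univ.biUnion fun v => (Finset.Icc 1 (mdeg ends v)).image fun i => (v, i)

/-- `A(e) = {(x,i) ∈ S : x is an endpoint of e}`. -/
def mA [Fintype V] [Fintype E] [DecidableEq V] (ends : E → Sym2 V) (e : E) :
    Finset (V × ℕ) :=
  (mS ends).filter fun p => p.1 ∈ ends e

/-- `B` is a partial transversal of the set system `(A(e), e ∈ F)`. -/
def IsPT [Fintype V] [Fintype E] [DecidableEq V] (ends : E → Sym2 V) (F : Finset E)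
    (B : Finset (V × ℕ)) : Prop :=
  ∃ f : V × ℕ → E, Set.InjOn f ↑B ∧ ∀ b ∈ B, f b ∈ F ∧ b ∈ mA ends (f b)

/-- A labeling of the graph with respect to a vector `α : V → ℕ`. -/
def IsLabeling [Fintype E] [DecidableEq V] (ends : E → Sym2 V) (α : V → ℕ)
    (φ : E → Option V) : Prop :=
  (∀ e v, φ e = some v → v ∈ ends e) ∧
    ∀ v, (Finset.univ.filter fun e => φ e = some v).card ≤ α v

/-- The height of a labeling. -/
def height [Fintype E] [DecidableEq V] (φ : E → Option V) : ℕ :=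
  (Finset.univ.filter fun e => φ e ≠ none).card

/-- `alphaVec X v = m_X(v)`, the α-vector of `X`. -/
def alphaVec [DecidableEq V] (X : Finset (V × ℕ)) (v : V) : ℕ :=
  (X.filter fun p => p.1 = v).card

/-! If `B ⊆ S(W)` is a partial transversal, its injection sends each `(v, i) ∈ B` to an edge at
`v ∈ W`, so `|B|` is at most the number of edges meeting `W`. Conversely, choose for every edge
meeting `W` an endpoint in `W`. At most `deg v` edges choose `v`, so numbering them
`(v, 1), (v, 2), …` gives a partial transversal inside `S(W)` with one element per such edge. -/

namespace Finset

variable {α β : Type*} [DecidableEq β]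

def fiberIndices (s : Finset α) (g : α → β) : Finset (β × ℕ) :=
  (s.image g).biUnion fun b => (Icc 1 #{a ∈ s | g a = b}).image fun i => (b, i)

variable {s : Finset α} {g : α → β} {p : β × ℕ}

theorem mem_fiberIndices : p ∈ fiberIndices s g ↔ 1 ≤ p.2 ∧ p.2 ≤ #{a ∈ s | g a = p.1} := by
  obtain ⟨b, i⟩ := p
  simp only [fiberIndices, mem_biUnion, mem_image, mem_Icc, Prod.mk.injEq]
  constructor
  · rintro ⟨_, _, j, hj, rfl, rfl⟩
    exact hj
  · rintro ⟨hi, hib⟩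
    obtain ⟨a, ha⟩ := card_pos.1 (show 0 < #{x ∈ s | g x = b} by omega)
    exact ⟨b, ⟨a, (mem_filter.1 ha).1, (mem_filter.1 ha).2⟩, i, ⟨hi, hib⟩, rfl, rfl⟩

theorem card_fiberIndices : #(fiberIndices s g) = #s := by
  rw [fiberIndices, card_biUnion, card_eq_sum_card_image g s]
  · simp [card_image_of_injective _ (Prod.mk_right_injective _)]
  · intro b _ c _ hbc
    simp only [Function.onFun, disjoint_left, mem_image]
    rintro _ ⟨i, _, rfl⟩ ⟨j, _, h⟩
    exact hbc (congrArg Prod.fst h).symm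

variable [Nonempty α]

/-- `fiberEnum s g (b, i)` is the `i`-th element, counting from `1`, of the fibre of `g` over `b`
in `s`, in the order of `Finset.equivFin`; it is junk outside `fiberIndices s g`. -/
noncomputable def fiberEnum (s : Finset α) (g : α → β) (p : β × ℕ) : α :=
  if h : p.2 - 1 < #{a ∈ s | g a = p.1} then
    ({a ∈ s | g a = p.1}.equivFin.symm ⟨p.2 - 1, h⟩ : α)
  else Classical.arbitrary α

theorem fiberEnum_mem (hp : p ∈ fiberIndices s g) : fiberEnum s g p ∈ {a ∈ s | g a = p.1} := by
  have h : p.2 - 1 < #{a ∈ s | g a = p.1} := by have := mem_fiberIndices.1 hp; omega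
  rw [fiberEnum, dif_pos h]
  exact coe_mem _

theorem injOn_fiberEnum : Set.InjOn (fiberEnum s g) (fiberIndices s g) := by
  rintro ⟨b, i⟩ hp ⟨c, j⟩ hq hpq
  have hb := (mem_filter.1 (fiberEnum_mem hp)).2
  have hc := (mem_filter.1 (fiberEnum_mem hq)).2
  obtain rfl : b = c := hb.symm.trans (hpq ▸ hc)
  obtain ⟨hi, hi'⟩ : 1 ≤ i ∧ i - 1 < #{a ∈ s | g a = b} := by
    have := mem_fiberIndices.1 hp; dsimp only at this; omega
  obtain ⟨hj, hj'⟩ : 1 ≤ j ∧ j - 1 < #{a ∈ s | g a = b} := by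
    have := mem_fiberIndices.1 hq; dsimp only at this; omega
  simp only [fiberEnum, dif_pos hi', dif_pos hj', Subtype.coe_inj, Equiv.apply_eq_iff_eq,
    Fin.mk.injEq] at hpq
  simp only [Prod.mk.injEq, true_and]
  omega

end Finset

section

variable [Fintype E] [DecidableEq V] (ends : E → Sym2 V)

theorem card_filter_mem_le_mdeg (v : V) : #{e | v ∈ ends e} ≤ mdeg ends v := by
  rw [card_filter]
  refine sum_le_sum fun e _ => ?_
  split_ifs <;> simp_all

variable [Fintype V]

theorem IsPT.mono {F G : Finset E} {B : Finset (V × ℕ)} (hFG : F ⊆ G) (h : IsPT ends F B) :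
    IsPT ends G B :=
  let ⟨f, hf, hfB⟩ := h
  ⟨f, hf, fun b hb => ⟨hFG (hfB b hb).1, (hfB b hb).2⟩⟩

theorem card_le_of_isPT {F : Finset E} {B : Finset (V × ℕ)} {W : Finset V}
    (hBW : ∀ b ∈ B, b.1 ∈ W) (h : IsPT ends F B) : #B ≤ #{e ∈ F | ∃ v ∈ ends e, v ∈ W} := by
  obtain ⟨f, hf, hfB⟩ := h
  refine card_le_card_of_injOn f (fun b hb => ?_) hf
  exact mem_filter.2 ⟨(hfB b hb).1, b.1, (mem_filter.1 (hfB b hb).2).2, hBW b hb⟩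

theorem mem_mS {p : V × ℕ} : p ∈ mS ends ↔ 1 ≤ p.2 ∧ p.2 ≤ mdeg ends p.1 := by
  obtain ⟨v, i⟩ := p
  simp [mS]

theorem fiberIndices_subset_mS {F : Finset E} {g : E → V} (hg : ∀ e ∈ F, g e ∈ ends e) :
    fiberIndices F g ⊆ mS ends := by
  intro p hp
  obtain ⟨hp1, hp2⟩ := mem_fiberIndices.1 hp
  have hfiber : {e ∈ F | g e = p.1} ⊆ ({e | p.1 ∈ ends e} : Finset E) := fun e he => by
    obtain ⟨heF, hge⟩ := mem_filter.1 he
    exact mem_filter.2 ⟨mem_univ e, hge ▸ hg e heF⟩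
  exact (mem_mS ends).2
    ⟨hp1, hp2.trans ((card_le_card hfiber).trans (card_filter_mem_le_mdeg ends _))⟩

theorem isPT_fiberIndices [Nonempty E] {F : Finset E} {g : E → V} (hg : ∀ e ∈ F, g e ∈ ends e) :
    IsPT ends F (fiberIndices F g) := by
  refine ⟨fiberEnum F g, injOn_fiberEnum, fun p hp => ?_⟩
  obtain ⟨he, hgp⟩ := mem_filter.1 (fiberEnum_mem hp)
  exact ⟨he, mem_filter.2 ⟨fiberIndices_subset_mS ends hg hp, hgp ▸ hg _ he⟩⟩

end

/-- the max size of a partial transversal of `(A(e), e ∈ E)` contained in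
`S(W)` equals `|E| − |E₁|`, where `E₁` is the set of edges with both endpoints in `V \ W`. -/
theorem stmt5 [Fintype V] [Fintype E] [DecidableEq V] (ends : E → Sym2 V)
    (W : Finset V) (E₁ : Finset E) (hE₁ : ∀ e, e ∈ E₁ ↔ ∀ v ∈ ends e, v ∉ W) :
    sSup {k : ℕ | ∃ B ⊆ (mS ends).filter (fun p => p.1 ∈ W),
        IsPT ends Finset.univ B ∧ B.card = k} =
      Fintype.card E - E₁.card := by
  set K := {k : ℕ | ∃ B ⊆ (mS ends).filter (fun p => p.1 ∈ W),
    IsPT ends Finset.univ B ∧ B.card = k}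
  set E₂ : Finset E := {e | ∃ v ∈ ends e, v ∈ W}
  have hE₂ : #E₂ = Fintype.card E - #E₁ := by
    have hE₁' : E₁ = ({e | ¬∃ v ∈ ends e, v ∈ W} : Finset E) := by ext e; simp [hE₁]
    rw [hE₁', ← card_univ, ← card_filter_add_card_filter_not (s := univ) (∃ v ∈ ends ·, v ∈ W),
      Nat.add_sub_cancel]
  have hub : #E₂ ∈ upperBounds K := by
    rintro _ ⟨B, hB, hPT, rfl⟩
    exact card_le_of_isPT ends (fun b hb => (mem_filter.1 (hB hb)).2) hPT
  rw [← hE₂]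
  refine le_antisymm (csSup_le' hub) ?_
  rcases isEmpty_or_nonempty E with _ | _
  · simp [E₂]
  have hchoice : ∀ e, ∃ v ∈ ends e, e ∈ E₂ → v ∈ W := fun e => by
    by_cases he : e ∈ E₂
    · obtain ⟨v, hv, hvW⟩ := (mem_filter.1 he).2
      exact ⟨v, hv, fun _ => hvW⟩
    · exact ⟨_, Sym2.out_fst_mem _, fun h => absurd h he⟩
  choose g hg hgW using hchoice
  refine le_csSup ⟨_, hub⟩ ⟨fiberIndices E₂ g, fun p hp => ?_,
    (isPT_fiberIndices ends fun e _ => hg e).mono ends (subset_univ _), card_fiberIndices⟩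
  obtain ⟨he, hgp⟩ := mem_filter.1 (fiberEnum_mem hp)
  exact mem_filter.2 ⟨fiberIndices_subset_mS ends (fun e _ => hg e) hp, hgp ▸ hgW _ he⟩
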